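/- Let n ≥ 2. The map sending a sequence of transpositions ((x₁,y₁),…,(x_k,y_k)) with 0 < x₁ < … < x_k < n and x_i < y_i ≤ n to the product σ = (x₁,y₁)·…·(x_k,y_k) ∈ S_n is injective. -/

import Mathlib

/-!
Reading the product `σ = (x₁ y₁) ⋯ (x_k y_k)` from the right, every transposition other than the
first moves only points above `x₁`, so `x₁` is the smallest point moved by `σ` and `σ x₁ = y₁`.
Thus `σ` determines the first transposition, and cancelling it we recurse on the rest.
-/

open Equiv

variable {α : Type*}

section swapProd

variable [DecidableEq α]

def swapProd (L : List (α × α)) : Perm α :=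
  (L.map fun p => swap p.1 p.2).prod

@[simp]
lemma swapProd_nil : swapProd ([] : List (α × α)) = 1 := rfl

@[simp]
lemma swapProd_cons (p : α × α) (L : List (α × α)) :
    swapProd (p :: L) = swap p.1 p.2 * swapProd L := rfl

lemma swapProd_apply_of_forall_ne {L : List (α × α)} {t : α}
    (ht : ∀ p ∈ L, t ≠ p.1 ∧ t ≠ p.2) : swapProd L t = t := by
  induction L with
  | nil => rfl
  | cons p L ih =>
    obtain ⟨htp₁, htp₂⟩ := ht p List.mem_cons_self
    rw [swapProd_cons, Perm.mul_apply, ih fun q hq => ht q (List.mem_cons_of_mem p hq),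
      swap_apply_of_ne_of_ne htp₁ htp₂]

end swapProd

variable [LinearOrder α]

def SortedTranspositions (L : List (α × α)) : Prop :=
  L.Pairwise (fun p q => p.1 < q.1) ∧ ∀ p ∈ L, p.1 < p.2

namespace SortedTranspositions

lemma cons_iff {p : α × α} {L : List (α × α)} :
    SortedTranspositions (p :: L) ↔
      p.1 < p.2 ∧ (∀ q ∈ L, p.1 < q.1) ∧ SortedTranspositions L := by
  simp only [SortedTranspositions, List.pairwise_cons, List.forall_mem_cons]
  tauto

lemma swapProd_apply_of_lt {L : List (α × α)} (hL : SortedTranspositions L) {t : α}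
    (ht : ∀ p ∈ L, t < p.1) : swapProd L t = t :=
  swapProd_apply_of_forall_ne fun p hp =>
    ⟨(ht p hp).ne, ((ht p hp).trans (hL.2 p hp)).ne⟩

lemma swapProd_cons_apply_fst {p : α × α} {L : List (α × α)}
    (hL : SortedTranspositions (p :: L)) : swapProd (p :: L) p.1 = p.2 := by
  obtain ⟨-, hpL, hL⟩ := cons_iff.1 hL
  rw [swapProd_cons, Perm.mul_apply, hL.swapProd_apply_of_lt hpL, swap_apply_left]

lemma swapProd_cons_ne_one {p : α × α} {L : List (α × α)}
    (hL : SortedTranspositions (p :: L)) : swapProd (p :: L) ≠ 1 := fun h => by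
  have hp := hL.swapProd_cons_apply_fst
  rw [h, Perm.one_apply] at hp
  exact (cons_iff.1 hL).1.ne hp

lemma fst_le_of_swapProd_eq {p q : α × α} {L M : List (α × α)}
    (hL : SortedTranspositions (p :: L)) (hM : SortedTranspositions (q :: M))
    (h : swapProd (p :: L) = swapProd (q :: M)) : q.1 ≤ p.1 := by
  by_contra! hpq
  obtain ⟨-, hqM, -⟩ := cons_iff.1 hM
  have hfix : swapProd (q :: M) p.1 = p.1 :=
    hM.swapProd_apply_of_lt <| List.forall_mem_cons.2 ⟨hpq, fun r hr => hpq.trans (hqM r hr)⟩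
  rw [← h, hL.swapProd_cons_apply_fst] at hfix
  exact (cons_iff.1 hL).1.ne' hfix

lemma head_eq_of_swapProd_eq {p q : α × α} {L M : List (α × α)}
    (hL : SortedTranspositions (p :: L)) (hM : SortedTranspositions (q :: M))
    (h : swapProd (p :: L) = swapProd (q :: M)) : p = q := by
  have hfst : p.1 = q.1 :=
    le_antisymm (fst_le_of_swapProd_eq hM hL h.symm) (fst_le_of_swapProd_eq hL hM h)
  have hsnd : p.2 = q.2 := by
    rw [← hL.swapProd_cons_apply_fst, ← hM.swapProd_cons_apply_fst, h, hfst]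
  exact Prod.ext hfst hsnd

end SortedTranspositions

theorem injOn_swapProd : Set.InjOn swapProd {L : List (α × α) | SortedTranspositions L} := by
  intro L hL M hM h
  induction L generalizing M with
  | nil =>
    cases M with
    | nil => rfl
    | cons q M => exact absurd h.symm (SortedTranspositions.swapProd_cons_ne_one hM)
  | cons p L ih =>
    cases M with
    | nil => exact absurd h (SortedTranspositions.swapProd_cons_ne_one hL)
    | cons q M =>
      obtain rfl := SortedTranspositions.head_eq_of_swapProd_eq hL hM h
      rw [swapProd_cons, swapProd_cons, mul_right_inj] at h
      rw [ih (SortedTranspositions.cons_iff.1 hL).2.2 (SortedTranspositions.cons_iff.1 hM).2.2 h]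

lemma List.pairwise_of_isChain_fst_lt {L : List (α × α)} (h : L.IsChain fun p q => p.1 < q.1) :
    L.Pairwise fun p q => p.1 < q.1 :=
  List.pairwise_map.1 ((List.isChain_map Prod.fst).2 h).pairwise

theorem stmt14_general (n : ℕ)
    (L₁ L₂ : List (Fin n × Fin n))
    (h₁ : L₁.Chain' fun p q => p.1 < q.1) (h₁' : ∀ p ∈ L₁, p.1 < p.2)
    (h₂ : L₂.Chain' fun p q => p.1 < q.1) (h₂' : ∀ p ∈ L₂, p.1 < p.2)
    (heq : (L₁.map fun p => Equiv.swap p.1 p.2).prod =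
           (L₂.map fun p => Equiv.swap p.1 p.2).prod) :
    L₁ = L₂ :=
  injOn_swapProd ⟨List.pairwise_of_isChain_fst_lt h₁, h₁'⟩
    ⟨List.pairwise_of_isChain_fst_lt h₂, h₂'⟩ heq

theorem stmt14 (n : ℕ) (hn : 2 ≤ n)
    (L₁ L₂ : List (Fin n × Fin n))
    (h₁ : L₁.Chain' fun p q => p.1 < q.1) (h₁' : ∀ p ∈ L₁, p.1 < p.2)
    (h₂ : L₂.Chain' fun p q => p.1 < q.1) (h₂' : ∀ p ∈ L₂, p.1 < p.2)
    (heq : (L₁.map fun p => Equiv.swap p.1 p.2).prod =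
           (L₂.map fun p => Equiv.swap p.1 p.2).prod) :
    L₁ = L₂ :=
  stmt14_general n L₁ L₂ h₁ h₁' h₂ h₂' heq
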